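/- Consider the modified skip-free algorithm applied to a finite communicating MDP on S = {0, 1, …, M} that is skip-free in the negative direction, producing sequences of policies d_n and values g_n. Then: (i) at each iteration either g_{n+1} < g_n, or g_{n+1} = g_n, and in the latter case g_{n+1} is the minimal expected average cost, and there exists K ∈ {0,…,M} such that d_{n+1}, together with the values x = g_{n+1} and the computed y_i, satisfies the skip-free average-cost optimality equations on the states K, …, M of the restricted model Π_K, and d_{n+1} can be modified on the transient states 0, …, K−1 to yield a stationary deterministic policy that is average cost optimal for every starting state; (ii) the modified algorithm converges (g_{n+1} = g_n) after a finite number of iterations. -/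

import Mathlib

/-!
Let `ε = g (n + 1) - g n`, the least `u n r`. With the relative values `h_j = y_1 + ⋯ + y_j`,
skip-freeness turns `c_i(a) + ∑_j p_ij(a) h_j - g n - h_i` into the numerator of the test
quantity of `a` at `i` minus `p_{i,i-1}(a) y_i`. By the minimality defining `y` and `u`, if
`ε ≥ 0` this residual is nonnegative for every action, and at least `ε` where the action cannot
step down. Every policy visits such states with positive frequency (stepping down leads to one,
at the latest to `0`), so every policy has average cost at least `g n + ε β` for some `β > 0`.

On the other hand `d (n + 1)` solves the Poisson equation with gain `g n + u n r` on the closed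
set `{r, …, M}`, with relative values `∑_{r < k ≤ j} (y_k - u_r t_k)`, so each `g n` is the
average cost of some policy. Hence `ε > 0` is impossible, `ε = 0` makes `g n` optimal, and a
strictly decreasing `g` would take infinitely many of the finitely many average costs. In the
equality case, actions below `K` that reach `{K, …, M}` (they exist as the model is
communicating) extend the Poisson equation to all states: off `{K, …, M}` it is a linear system
whose matrix is invertible since the chain is absorbed.
-/

open Finset Filter

noncomputable section

/-- A rooted tree structure on a state space `S`: a root, a parent map fixing the root,
such that iterating the parent map from any state reaches the root. -/
structure SFTree (S : Type*) where
  root : S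
  parent : S → S
  parent_root : parent root = root
  reaches_root : ∀ i : S, ∃ n : ℕ, parent^[n] i = root

namespace SFTree

variable {S : Type*} [Fintype S] [DecidableEq S]

open Classical in
/-- The set of descendants of `i`: states `j ≠ i` whose path to the root passes through `i`. -/
def desc (T : SFTree S) (i : S) : Finset S :=
  Finset.univ.filter fun j => j ≠ i ∧ ∃ n : ℕ, T.parent^[n] j = i

open Classical in
/-- The subtree rooted at `i`: `i` together with its descendants. -/
def subtree (T : SFTree S) (i : S) : Finset S :=
  Finset.univ.filter fun j => ∃ n : ℕ, T.parent^[n] j = i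

open Classical in
/-- The states strictly after `i` on the path from `i` to `j`. -/
def delta (T : SFTree S) (i j : S) : Finset S :=
  Finset.univ.filter fun r =>
    r ≠ i ∧ (∃ n : ℕ, T.parent^[n] j = r) ∧ (∃ m : ℕ, T.parent^[m] r = i)

end SFTree

/-- A finite Markov decision process: costs and transition probabilities. -/
structure MDP (S A : Type*) [Fintype S] where
  c : S → A → ℝ
  p : S → A → S → ℝ
  p_nonneg : ∀ i a j, 0 ≤ p i a j
  p_sum_one : ∀ i a, ∑ j, p i a j = 1

namespace MDP

variable {S A : Type*} [Fintype S] [DecidableEq S]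

/-- Tail probability: the probability of jumping from `i` into the subtree rooted at `k`. -/
def ptail (M : MDP S A) (T : SFTree S) (i : S) (a : A) (k : S) : ℝ :=
  ∑ s ∈ T.subtree k, M.p i a s

/-- Skip-free in the negative direction on the tree `T`: from `i ≠ root` the only possible
transitions are to the parent of `i` or into the subtree rooted at `i`. -/
def IsSkipFree (M : MDP S A) (T : SFTree S) : Prop :=
  ∀ i, i ≠ T.root → ∀ a j, M.p i a j ≠ 0 → j = T.parent i ∨ j ∈ T.subtree i

/-- Transition matrix of the stationary deterministic policy `d`. -/
def Pmat (M : MDP S A) (d : S → A) : Matrix S S ℝ :=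
  Matrix.of fun i j => M.p i (d i) j

/-- Cost vector of the stationary deterministic policy `d`. -/
def cvec (M : MDP S A) (d : S → A) : S → ℝ := fun i => M.c i (d i)

/-- Expected average cost of the stationary deterministic policy `d` starting from `i`. -/
def avgCost (M : MDP S A) (d : S → A) (i : S) : ℝ :=
  Filter.limsup
    (fun n : ℕ => (n : ℝ)⁻¹ * ∑ t ∈ Finset.range n, ((M.Pmat d ^ t).mulVec (M.cvec d)) i)
    Filter.atTop

end MDP

/-- A (substochastic) matrix is irreducible if every state can reach every other state
in a positive number of steps. -/
def MatIrreducible {S : Type*} [Fintype S] [DecidableEq S] (P : Matrix S S ℝ) : Prop :=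
  ∀ i j, ∃ n : ℕ, 0 < n ∧ 0 < (P ^ n) i j

/-- A recurrent model: every stationary deterministic policy has an irreducible
transition matrix. -/
def IsRecurrentModel {S A : Type*} [Fintype S] [DecidableEq S] (M : MDP S A) : Prop :=
  ∀ d : S → A, MatIrreducible (M.Pmat d)

/-- The probability weight of a path of length `n`. -/
def pathWt {S : Type*} [Fintype S] (P : Matrix S S ℝ) {n : ℕ} (x : Fin (n + 1) → S) : ℝ :=
  ∏ t : Fin n, P (x t.castSucc) (x t.succ)

open Classical in
/-- `E[f(X_n); τ > n]` for the chain with matrix `P` started at `z`, where `τ` is the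
first-return epoch to `z` (the first time the chain enters `z` from a state `≠ z`). -/
def retTerm {S : Type*} [Fintype S] (P : Matrix S S ℝ) (z : S) (f : S → ℝ) (n : ℕ) : ℝ :=
  ∑ x ∈ Finset.univ.filter
      (fun (x : Fin (n + 1) → S) =>
        x 0 = z ∧ ∀ t : Fin n, ¬(x t.castSucc ≠ z ∧ x t.succ = z)),
    pathWt P x * f (x (Fin.last n))

/-- `E[∑_{t=0}^{τ-1} f(X_t)]` for the chain with matrix `P` started at `z`, where `τ` is the
first-return epoch to `z`. -/
def retSum {S : Type*} [Fintype S] (P : Matrix S S ℝ) (z : S) (f : S → ℝ) : ℝ :=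
  ∑' n : ℕ, retTerm P z f n

open Classical in
/-- `E[f(X_n); σ > n]` for the chain with matrix `P` started at `i`, where `σ` is the
first-passage epoch to `z`, `σ = min {t > 0 : X_t = z}`. -/
def passTerm {S : Type*} [Fintype S] (P : Matrix S S ℝ) (i z : S) (f : S → ℝ) (n : ℕ) : ℝ :=
  ∑ x ∈ Finset.univ.filter
      (fun (x : Fin (n + 1) → S) => x 0 = i ∧ ∀ t : Fin n, x t.succ ≠ z),
    pathWt P x * f (x (Fin.last n))

/-- `E[∑_{t=0}^{σ-1} f(X_t)]` for the chain with matrix `P` started at `i`, where `σ` is the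
first-passage epoch to `z`. -/
def passSum {S : Type*} [Fintype S] (P : Matrix S S ℝ) (i z : S) (f : S → ℝ) : ℝ :=
  ∑' n : ℕ, passTerm P i z f n

end

/-- A closed communicating class of the matrix `P`. -/
def IsClosedClass {S : Type*} [Fintype S] [DecidableEq S]
    (P : Matrix S S ℝ) (E : Set S) : Prop :=
  E.Nonempty
    ∧ (∀ i ∈ E, ∀ j ∈ E, ∃ n : ℕ, 0 < (P ^ n) i j)
    ∧ (∀ i ∈ E, ∀ j, 0 < P i j → j ∈ E)

/-- Tail probabilities `p̄_{ik}(a) = ∑_{s=k}^M p_{is}(a)` on `{0,…,M}`. -/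
noncomputable def ptailF {M : ℕ} {A : Type*}
    (Mdp : MDP (Fin (M + 1)) A) (i : Fin (M + 1)) (a : A) (k : Fin (M + 1)) : ℝ :=
  ∑ s ∈ Finset.Ici k, Mdp.p i a s

open Matrix Topology

theorem tendsto_cesaro_of_abs_sum_sub_le {x : ℕ → ℝ} {a C : ℝ}
    (h : ∀ N : ℕ, |∑ t ∈ range N, x t - N * a| ≤ C) :
    Tendsto (fun N : ℕ => (N : ℝ)⁻¹ * ∑ t ∈ range N, x t) atTop (𝓝 a) := by
  have hC : Tendsto (fun N : ℕ => C * (N : ℝ)⁻¹) atTop (𝓝 0) := by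
    simpa using tendsto_const_nhds.mul (tendsto_inv_atTop_nhds_zero_nat (𝕜 := ℝ))
  rw [tendsto_iff_norm_sub_tendsto_zero]
  refine squeeze_zero' (Eventually.of_forall fun _ => norm_nonneg _) ?_ hC
  filter_upwards [eventually_gt_atTop 0] with N hN
  have hN' : (0 : ℝ) < N := Nat.cast_pos.2 hN
  rw [Real.norm_eq_abs, show (N : ℝ)⁻¹ * ∑ t ∈ range N, x t - a
      = (N : ℝ)⁻¹ * (∑ t ∈ range N, x t - N * a) by field_simp,
    abs_mul, abs_of_pos (inv_pos.2 hN'), mul_comm]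
  exact mul_le_mul_of_nonneg_right (h N) (inv_nonneg.2 hN'.le)

theorem le_limsup_cesaro {x : ℕ → ℝ} {a B C : ℝ} (hx : ∀ t, x t ≤ B)
    (h : ∀ N : ℕ, N * a - C ≤ ∑ t ∈ range N, x t) :
    a ≤ limsup (fun N : ℕ => (N : ℝ)⁻¹ * ∑ t ∈ range N, x t) atTop := by
  have hlow : Tendsto (fun N : ℕ => a - C * (N : ℝ)⁻¹) atTop (𝓝 a) := by
    simpa using tendsto_const_nhds.sub
      (tendsto_const_nhds.mul (tendsto_inv_atTop_nhds_zero_nat (𝕜 := ℝ)))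
  rw [← hlow.limsup_eq]
  refine limsup_le_limsup ?_ hlow.isCoboundedUnder_le
    (isBoundedUnder_of_eventually_le (a := B) ?_)
  all_goals filter_upwards [eventually_gt_atTop 0] with N hN
  all_goals have hN' : (0 : ℝ) < N := Nat.cast_pos.2 hN
  · rw [show a - C * (N : ℝ)⁻¹ = (N : ℝ)⁻¹ * (N * a - C) by field_simp]
    exact mul_le_mul_of_nonneg_left (h N) (inv_nonneg.2 hN'.le)
  · rw [inv_mul_le_iff₀ hN']
    simpa using sum_le_card_nsmul (range N) x B fun t _ => hx t

theorem sum_range_sum_range_add_le {x : ℕ → ℝ} (hx : ∀ s, 0 ≤ x s) (N L : ℕ) :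
    ∑ t ∈ range N, ∑ k ∈ range L, x (t + k) ≤ L * ∑ s ∈ range (N + L), x s := by
  rw [sum_comm]
  refine (sum_le_sum fun k hk => ?_).trans_eq (by rw [sum_const, card_range, nsmul_eq_mul])
  calc ∑ t ∈ range N, x (t + k) ≤ ∑ s ∈ range (k + N), x s := by
        rw [sum_range_add]
        simp_rw [add_comm _ k]
        exact le_add_of_nonneg_left (sum_nonneg fun s _ => hx s)
    _ ≤ ∑ s ∈ range (N + L), x s :=
        sum_le_sum_of_subset_of_nonneg (range_subset_range.2 (by have := mem_range.1 hk; omega))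
          fun s _ _ => hx s


section MarkovChain

variable {S : Type*} [Fintype S] [DecidableEq S]

def IsClosedSet (P : Matrix S S ℝ) (F : Finset S) : Prop :=
  ∀ i ∈ F, ∀ j, P i j ≠ 0 → j ∈ F

theorem IsClosedSet.pow_apply_eq_zero {P : Matrix S S ℝ} {F : Finset S} (hF : IsClosedSet P F)
    {i j : S} (hi : i ∈ F) (hj : j ∉ F) (n : ℕ) : (P ^ n) i j = 0 := by
  induction n generalizing i with
  | zero => exact one_apply_ne fun hij => hj (hij ▸ hi)
  | succ n ih =>
    rw [pow_succ', mul_apply]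
    refine sum_eq_zero fun k _ => ?_
    by_cases hk : P i k = 0
    · rw [hk, zero_mul]
    · rw [ih (hF i hi k hk), mul_zero]

theorem IsClosedSet.sum_pow_apply_eq_one {P : Matrix S S ℝ} (hP : P ∈ rowStochastic ℝ S)
    {F : Finset S} (hF : IsClosedSet P F) {i : S} (hi : i ∈ F) (n : ℕ) :
    ∑ j ∈ F, (P ^ n) i j = 1 := by
  rw [sum_subset (subset_univ F) fun j _ hj => hF.pow_apply_eq_zero hi hj n,
    sum_row_of_mem_rowStochastic (pow_mem hP n)]

theorem le_sum_pow_succ_apply {P : Matrix S S ℝ} (hP : P ∈ rowStochastic ℝ S) (F : Finset S)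
    (k : ℕ) (i l : S) : P i l * ∑ j ∈ F, (P ^ k) l j ≤ ∑ j ∈ F, (P ^ (k + 1)) i j := by
  simp_rw [pow_succ', mul_apply]
  rw [sum_comm]
  simp_rw [← mul_sum]
  exact single_le_sum (f := fun l => P i l * ∑ j ∈ F, (P ^ k) l j)
    (fun l _ => mul_nonneg (hP.1 i l) (sum_nonneg fun j _ => (pow_mem hP k).1 l j)) (mem_univ l)

theorem abs_mulVec_apply_le {P : Matrix S S ℝ} (hP : P ∈ rowStochastic ℝ S) (v : S → ℝ)
    (i : S) : |(P *ᵥ v) i| ≤ ‖v‖ :=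
  calc |(P *ᵥ v) i| ≤ ∑ j, |P i j * v j| := abs_sum_le_sum_abs _ _
    _ ≤ ∑ j, P i j * ‖v‖ := sum_le_sum fun j _ => by
        rw [abs_mul, abs_of_nonneg (hP.1 i j), ← Real.norm_eq_abs]
        exact mul_le_mul_of_nonneg_left (norm_le_pi_norm v j) (hP.1 i j)
    _ = ‖v‖ := by rw [← sum_mul, sum_row_of_mem_rowStochastic hP, one_mul]

theorem IsClosedSet.sum_range_pow_mulVec_eq {P : Matrix S S ℝ} (hP : P ∈ rowStochastic ℝ S)
    {F : Finset S} (hF : IsClosedSet P F) {c h s : S → ℝ} {g : ℝ}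
    (heq : ∀ i ∈ F, c i + (P *ᵥ h) i = g + h i + s i) {j : S} (hj : j ∈ F) (N : ℕ) :
    ∑ t ∈ range N, (P ^ t *ᵥ c) j
      = N * g + h j - (P ^ N *ᵥ h) j + ∑ t ∈ range N, (P ^ t *ᵥ s) j := by
  have hstep : ∀ t, (P ^ t *ᵥ c) j
      = g + (P ^ t *ᵥ h) j - (P ^ (t + 1) *ᵥ h) j + (P ^ t *ᵥ s) j := by
    intro t
    have hc : (P ^ t *ᵥ c) j = (P ^ t *ᵥ (g • 1 + h + s - P *ᵥ h)) j := by
      refine sum_congr rfl fun i _ => ?_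
      by_cases hi : i ∈ F
      · have := heq i hi
        simp only [Pi.sub_apply, Pi.add_apply, Pi.smul_apply, Pi.one_apply, smul_eq_mul]
        congr 1
        linarith
      · simp [hF.pow_apply_eq_zero hj hi]
    rw [hc, mulVec_sub, mulVec_add, mulVec_add, mulVec_smul,
      one_vecMul_of_mem_rowStochastic (pow_mem hP t), mulVec_mulVec, ← pow_succ]
    simp only [Pi.add_apply, Pi.sub_apply, Pi.smul_apply, Pi.one_apply, smul_eq_mul, mul_one]
    ring
  have hsum : ∑ t ∈ range N, (P ^ t *ᵥ c) j = ∑ t ∈ range N, g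
      + ∑ t ∈ range N, ((P ^ t *ᵥ h) j - (P ^ (t + 1) *ᵥ h) j)
      + ∑ t ∈ range N, (P ^ t *ᵥ s) j := by
    rw [← sum_add_distrib, ← sum_add_distrib]
    exact sum_congr rfl fun t _ => by rw [hstep]; ring
  rw [hsum, sum_range_sub', pow_zero, one_mulVec, sum_const, card_range, nsmul_eq_mul]
  ring

theorem sum_range_sum_pow_apply_ge {P : Matrix S S ℝ} (hP : P ∈ rowStochastic ℝ S)
    {F : Finset S} {L : ℕ} {δ : ℝ} (hL : 0 < L) (hδ : 0 ≤ δ)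
    (hvisit : ∀ i, δ ≤ ∑ k ∈ range L, ∑ j ∈ F, (P ^ k) i j) (i : S) (N : ℕ) :
    N * (δ / L) - δ ≤ ∑ t ∈ range N, ∑ j ∈ F, (P ^ t) i j := by
  set x : ℕ → ℝ := fun t => ∑ j ∈ F, (P ^ t) i j
  have hx : ∀ t, 0 ≤ x t := fun t => sum_nonneg fun j _ => (pow_mem hP t).1 i j
  have hL' : (0 : ℝ) < L := Nat.cast_pos.2 hL
  have hwindow : ∀ t, δ ≤ ∑ k ∈ range L, x (t + k) := by
    intro t
    have hexp : ∑ k ∈ range L, x (t + k)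
        = ∑ l, (P ^ t) i l * ∑ k ∈ range L, ∑ j ∈ F, (P ^ k) l j := by
      simp_rw [x, pow_add, mul_apply, mul_sum]
      exact (sum_congr rfl fun k _ => sum_comm).trans sum_comm
    calc δ = ∑ l, (P ^ t) i l * δ := by
          rw [← sum_mul, sum_row_of_mem_rowStochastic (pow_mem hP t), one_mul]
      _ ≤ _ := sum_le_sum fun l _ => mul_le_mul_of_nonneg_left (hvisit l) ((pow_mem hP t).1 i l)
      _ = _ := hexp.symm
  rcases lt_or_ge N L with hNL | hNL
  · have h1 : N * (δ / L) ≤ δ :=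
      calc N * (δ / L) = N / L * δ := by ring
        _ ≤ 1 * δ :=
          mul_le_mul_of_nonneg_right ((div_le_one hL').2 (by exact_mod_cast hNL.le)) hδ
        _ = δ := one_mul δ
    linarith [sum_nonneg fun t (_ : t ∈ range N) => hx t]
  · obtain ⟨N₀, rfl⟩ := Nat.exists_eq_add_of_le' hNL
    have h1 : N₀ * δ ≤ L * ∑ t ∈ range (N₀ + L), x t :=
      calc N₀ * δ = ∑ _t ∈ range N₀, δ := by rw [sum_const, card_range, nsmul_eq_mul]
        _ ≤ ∑ t ∈ range N₀, ∑ k ∈ range L, x (t + k) := sum_le_sum fun t _ => hwindow t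
        _ ≤ _ := sum_range_sum_range_add_le hx N₀ L
    have h2 : ((N₀ + L : ℕ) : ℝ) * (δ / L) - δ = N₀ * δ / L := by
      push_cast; field_simp; ring
    rw [h2, div_le_iff₀ hL']
    linarith

theorem exists_le_sum_range_sum_pow_apply [Nonempty S] {P : Matrix S S ℝ}
    (hP : P ∈ rowStochastic ℝ S) {F : Finset S}
    (h : ∀ i, ∃ k, 0 < ∑ j ∈ F, (P ^ k) i j) :
    ∃ L, 0 < L ∧ ∃ δ, 0 < δ ∧ ∀ i, δ ≤ ∑ l ∈ range L, ∑ j ∈ F, (P ^ l) i j := by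
  choose k hk using h
  set f : S → ℝ := fun i => ∑ l ∈ range (univ.sup k + 1), ∑ j ∈ F, (P ^ l) i j
  have hf : ∀ i, 0 < f i := fun i => (hk i).trans_le <|
    single_le_sum (f := fun l => ∑ j ∈ F, (P ^ l) i j)
      (fun l _ => sum_nonneg fun j _ => (pow_mem hP l).1 i j)
      (mem_range.2 (Nat.lt_succ_of_le (le_sup (mem_univ i))))
  obtain ⟨i₀, hi₀⟩ := Finite.exists_min f
  exact ⟨_, Nat.succ_pos _, f i₀, hf i₀, hi₀⟩

def killedOn (P : Matrix S S ℝ) (F : Finset S) : Matrix S S ℝ :=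
  of fun i j => if i ∈ F then 0 else P i j

/-- The killed chain survives `l + 1` steps only if it has not been absorbed in `F` after `l`. -/
theorem sum_killedOn_pow_add_sum_pow_le_one {P : Matrix S S ℝ} (hP : P ∈ rowStochastic ℝ S)
    (F : Finset S) (l : ℕ) (i : S) :
    ∑ j, (killedOn P F ^ (l + 1)) i j + ∑ j ∈ F, (P ^ l) i j ≤ 1 := by
  induction l generalizing i with
  | zero =>
    by_cases hi : i ∈ F
    · simp [killedOn, hi, one_apply]
    · simp [killedOn, hi, one_apply, sum_row_of_mem_rowStochastic hP]
  | succ l ih =>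
    have hsplit : ∀ (Q : Matrix S S ℝ) (m : ℕ) (G : Finset S),
        ∑ j ∈ G, (Q ^ (m + 1)) i j = ∑ k, Q i k * ∑ j ∈ G, (Q ^ m) k j := by
      intro Q m G
      simp_rw [pow_succ', mul_apply, mul_sum]
      exact sum_comm
    have hrow : ∑ k, P i k * ∑ j ∈ F, (P ^ l) k j ≤ 1 :=
      calc _ ≤ ∑ k, P i k * 1 := sum_le_sum fun k _ => mul_le_mul_of_nonneg_left
              ((sum_le_sum_of_subset_of_nonneg (subset_univ F)
                fun j _ _ => (pow_mem hP _).1 k j).trans_eq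
                (sum_row_of_mem_rowStochastic (pow_mem hP _) k)) (hP.1 i k)
        _ = 1 := by rw [← sum_mul, sum_row_of_mem_rowStochastic hP, one_mul]
    rw [hsplit (killedOn P F) (l + 1) univ, hsplit P l F]
    by_cases hi : i ∈ F
    · simpa [killedOn, hi] using hrow
    · calc _ = ∑ k, P i k * (∑ j, (killedOn P F ^ (l + 1)) k j + ∑ j ∈ F, (P ^ l) k j) :=
            by simp [killedOn, hi, mul_add, sum_add_distrib]
        _ ≤ ∑ k, P i k * 1 := sum_le_sum fun k _ => mul_le_mul_of_nonneg_left (ih k) (hP.1 i k)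
        _ = 1 := by rw [← sum_mul, sum_row_of_mem_rowStochastic hP, one_mul]

theorem det_one_sub_ne_zero {Q : Matrix S S ℝ} (hQ : ∀ i j, 0 ≤ Q i j) {n : ℕ}
    (h : ∀ i, ∑ j, (Q ^ n) i j < 1) : (1 - Q).det ≠ 0 := by
  have hdom : (1 - Q ^ n).det ≠ 0 := by
    refine det_ne_zero_of_sum_row_lt_diag fun k => ?_
    have hoff :
        ∑ j ∈ univ.erase k, ‖(1 - Q ^ n) k j‖ = ∑ j ∈ univ.erase k, (Q ^ n) k j :=
      sum_congr rfl fun j hj => by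
        rw [Matrix.sub_apply, one_apply_ne (ne_of_mem_erase hj).symm, zero_sub, norm_neg,
          Real.norm_of_nonneg (pow_apply_nonneg hQ n k j)]
    rw [hoff, Matrix.sub_apply, one_apply_eq, Real.norm_eq_abs]
    have := add_sum_erase univ (fun j => (Q ^ n) k j) (mem_univ k)
    linarith [h k, le_abs_self (1 - (Q ^ n) k k)]
  intro h0
  rw [← mul_neg_geom_sum, det_mul, h0, zero_mul] at hdom
  exact hdom rfl

/-- Off `F` the extension solves a linear system with matrix `1 - killedOn P F`, invertible
because the chain is eventually absorbed in `F`. -/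
theorem IsClosedSet.exists_poisson_extension {P : Matrix S S ℝ} (hP : P ∈ rowStochastic ℝ S)
    {F : Finset S} (hF : IsClosedSet P F) {m : ℕ} (hhit : ∀ i, 0 < ∑ j ∈ F, (P ^ m) i j)
    {c h : S → ℝ} {g : ℝ} (heq : ∀ i ∈ F, c i + (P *ᵥ h) i = g + h i) :
    ∃ h' : S → ℝ, ∀ i, c i + (P *ᵥ h') i = g + h' i := by
  set Q := killedOn P F
  have hQ : ∀ i j, 0 ≤ Q i j := fun i j => by
    by_cases hi : i ∈ F <;> simp [Q, killedOn, hi, hP.1 i j]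
  have hdet : (1 - Q).det ≠ 0 := det_one_sub_ne_zero hQ (n := m + 1) fun i => by
    linarith [sum_killedOn_pow_add_sum_pow_le_one hP F m i, hhit i]
  set b : S → ℝ := fun i => if i ∈ F then h i else c i - g
  obtain ⟨h', hh'⟩ := mulVec_surjective_iff_isUnit.2
    ((isUnit_iff_isUnit_det _).2 (isUnit_iff_ne_zero.2 hdet)) b
  have hfix : ∀ i, h' i = (Q *ᵥ h') i + b i := fun i => by
    have := congrFun hh' i
    rw [sub_mulVec, one_mulVec, Pi.sub_apply] at this
    linarith
  have hQmulVec : ∀ i, (Q *ᵥ h') i = if i ∈ F then 0 else (P *ᵥ h') i := fun i => by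
    by_cases hi : i ∈ F <;> simp [Q, killedOn, hi, mulVec, dotProduct]
  have hF' : ∀ i ∈ F, h' i = h i := fun i hi => by simp [hfix i, hQmulVec, b, hi]
  refine ⟨h', fun i => ?_⟩
  by_cases hi : i ∈ F
  · have hPh : (P *ᵥ h') i = (P *ᵥ h) i := sum_congr rfl fun j _ => by
      by_cases hj : j ∈ F
      · rw [hF' j hj]
      · have : P i j = 0 := by simpa using hF.pow_apply_eq_zero hi hj 1
        simp [this]
    rw [hPh, hF' i hi, heq i hi]
  · have := hfix i
    simp only [hQmulVec, b, hi, if_false] at this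
    linarith

end MarkovChain

namespace MDP

variable {S A : Type*} [Fintype S] (Mdp : MDP S A)

theorem Pmat_mulVec_apply (d : S → A) (v : S → ℝ) (i : S) :
    (Mdp.Pmat d *ᵥ v) i = ∑ j, Mdp.p i (d i) j * v j :=
  rfl

theorem isClosedSet_Pmat_of_eqOn {d d' : S → A} {F : Finset S} (hF : IsClosedSet (Mdp.Pmat d) F)
    (hdd' : ∀ i ∈ F, d' i = d i) : IsClosedSet (Mdp.Pmat d') F := fun i hi j hij =>
  hF i hi j (by simpa [Pmat, hdd' i hi] using hij)

variable [DecidableEq S]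

theorem Pmat_mem_rowStochastic (d : S → A) : Mdp.Pmat d ∈ rowStochastic ℝ S :=
  mem_rowStochastic_iff_sum.2
    ⟨fun i j => Mdp.p_nonneg i (d i) j, fun i => Mdp.p_sum_one i (d i)⟩

theorem avgCost_eq_of_poisson {d : S → A} {F : Finset S} (hF : IsClosedSet (Mdp.Pmat d) F)
    {h : S → ℝ} {g : ℝ} (heq : ∀ i ∈ F, Mdp.c i (d i) + (Mdp.Pmat d *ᵥ h) i = g + h i)
    {j : S} (hj : j ∈ F) : Mdp.avgCost d j = g := by
  have hP := Mdp.Pmat_mem_rowStochastic d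
  refine (tendsto_cesaro_of_abs_sum_sub_le (C := 2 * ‖h‖) fun N => ?_).limsup_eq
  rw [hF.sum_range_pow_mulVec_eq hP (c := Mdp.cvec d) (s := 0)
    (fun i hi => (heq i hi).trans (add_zero _).symm) hj N]
  simp only [mulVec_zero, Pi.zero_apply, sum_const_zero, add_zero]
  have h₁ := abs_mulVec_apply_le (pow_mem hP N) h j
  have h₂ : |h j| ≤ ‖h‖ := Real.norm_eq_abs (h j) ▸ norm_le_pi_norm h j
  rw [show (N : ℝ) * g + h j - (Mdp.Pmat d ^ N *ᵥ h) j - N * g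
    = h j - (Mdp.Pmat d ^ N *ᵥ h) j by ring]
  exact (abs_sub _ _).trans (by linarith)

theorem le_avgCost_of_residual {d : S → A} {h : S → ℝ} {g ε δ : ℝ} {F : Finset S}
    {L : ℕ} (hε : 0 ≤ ε) (hL : 0 < L) (hδ : 0 ≤ δ)
    (hres : ∀ i, g + h i + (if i ∈ F then ε else 0) ≤ Mdp.c i (d i) + (Mdp.Pmat d *ᵥ h) i)
    (hvisit : ∀ i, δ ≤ ∑ k ∈ range L, ∑ j ∈ F, (Mdp.Pmat d ^ k) i j) (j : S) :
    g + ε * (δ / L) ≤ Mdp.avgCost d j := by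
  have hP := Mdp.Pmat_mem_rowStochastic d
  set s : S → ℝ := fun i => Mdp.c i (d i) + (Mdp.Pmat d *ᵥ h) i - g - h i
  have htel := fun N => (show IsClosedSet (Mdp.Pmat d) univ from fun _ _ _ _ => mem_univ _)
    |>.sum_range_pow_mulVec_eq hP (c := Mdp.cvec d) (h := h) (s := s) (g := g)
      (fun i _ => by simp only [s, cvec]; ring) (mem_univ j) N
  have hs : ∀ t, ε * ∑ i ∈ F, (Mdp.Pmat d ^ t) j i ≤ (Mdp.Pmat d ^ t *ᵥ s) j := fun t =>
    calc ε * ∑ i ∈ F, (Mdp.Pmat d ^ t) j i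
        = ∑ i, (Mdp.Pmat d ^ t) j i * (if i ∈ F then ε else 0) := by
          simp [mul_sum, mul_comm]
      _ ≤ _ := sum_le_sum fun i _ => mul_le_mul_of_nonneg_left
          (by have := hres i; simp only [s]; linarith) ((pow_mem hP t).1 j i)
  refine le_limsup_cesaro (B := ‖Mdp.cvec d‖) (C := 2 * ‖h‖ + ε * δ)
    (fun t => (le_abs_self _).trans (abs_mulVec_apply_le (pow_mem hP t) _ j)) fun N => ?_
  have hvis := sum_range_sum_pow_apply_ge hP hL hδ hvisit j N
  have h₁ := abs_le.1 (abs_mulVec_apply_le (pow_mem hP N) h j)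
  have h₂ := abs_le.1 (Real.norm_eq_abs (h j) ▸ norm_le_pi_norm h j)
  have hsum : ε * (N * (δ / L) - δ) ≤ ∑ t ∈ range N, (Mdp.Pmat d ^ t *ᵥ s) j :=
    (mul_le_mul_of_nonneg_left hvis hε).trans
      ((mul_sum _ _ _).trans_le (sum_le_sum fun t _ => hs t))
  rw [htel N]
  linarith

/-- `ρ i` can be taken as the least number of steps in which some policy reaches `F` from `i`. -/
theorem exists_rank_descent {F : Finset S}
    (hreach : ∀ i, ∃ n, ∃ d : S → A, 0 < ∑ j ∈ F, (Mdp.Pmat d ^ n) i j) :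
    ∃ ρ : S → ℕ, (∀ i, ρ i = 0 → i ∈ F) ∧ ∀ i ∉ F, ∃ a j, 0 < Mdp.p i a j ∧ ρ j < ρ i := by
  classical
  have hρ_zero : ∀ i, Nat.find (hreach i) = 0 → i ∈ F := fun i hi => by
    obtain ⟨d, hd⟩ := Nat.find_spec (hreach i)
    rw [hi, pow_zero] at hd
    by_contra hiF
    exact hd.ne' (sum_eq_zero fun j hj => one_apply_ne fun h => hiF (h ▸ hj))
  refine ⟨fun i => Nat.find (hreach i), hρ_zero, fun i hiF => ?_⟩
  obtain ⟨d, hd⟩ := Nat.find_spec (hreach i)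
  obtain ⟨n, hn⟩ := Nat.exists_eq_succ_of_ne_zero fun h => hiF (hρ_zero i h)
  rw [hn, pow_succ'] at hd
  simp_rw [mul_apply] at hd
  rw [sum_comm] at hd
  obtain ⟨j, -, hj⟩ := exists_lt_of_sum_lt (hd.trans_eq' sum_const_zero.symm)
  simp_rw [← mul_sum] at hj
  have hp : 0 < Mdp.p i (d i) j := lt_of_le_of_ne (Mdp.p_nonneg _ _ _) fun h => by
    simp [Pmat, ← h] at hj
  exact ⟨d i, j, hp, (Nat.find_min' _ ⟨d, pos_of_mul_pos_right hj hp.le⟩).trans_lt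
    (by beta_reduce; omega)⟩

theorem exists_policy_hitting {d : S → A} {F : Finset S} (hF : IsClosedSet (Mdp.Pmat d) F)
    (hreach : ∀ i, ∃ n, ∃ d' : S → A, 0 < ∑ j ∈ F, (Mdp.Pmat d' ^ n) i j) :
    ∃ d' : S → A, (∀ i ∈ F, d' i = d i)
      ∧ ∃ m, ∀ i, 0 < ∑ j ∈ F, (Mdp.Pmat d' ^ m) i j := by
  classical
  obtain ⟨ρ, hρ_zero, hdesc⟩ := Mdp.exists_rank_descent hreach
  choose a j hpos hρ using hdesc
  set d' : S → A := fun i => if hi : i ∈ F then d i else a i hi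
  have hd'F : ∀ i ∈ F, d' i = d i := fun i hi => dif_pos hi
  have hP := Mdp.Pmat_mem_rowStochastic d'
  have hF' := Mdp.isClosedSet_Pmat_of_eqOn hF hd'F
  have key : ∀ m i, ρ i ≤ m → 0 < ∑ k ∈ F, (Mdp.Pmat d' ^ m) i k := by
    intro m
    induction m with
    | zero =>
      intro i hi
      rw [hF'.sum_pow_apply_eq_one hP (hρ_zero i (Nat.le_zero.1 hi))]
      exact one_pos
    | succ m ih =>
      intro i hi
      by_cases hiF : i ∈ F
      · rw [hF'.sum_pow_apply_eq_one hP hiF]; exact one_pos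
      · refine lt_of_lt_of_le ?_ (le_sum_pow_succ_apply hP F m i (j i hiF))
        have : Mdp.Pmat d' i (j i hiF) = Mdp.p i (a i hiF) (j i hiF) := by
          simp [Pmat, d', hiF]
        rw [this]
        exact mul_pos (hpos i hiF) (ih _ (by have := hρ i hiF; omega))
  exact ⟨d', hd'F, univ.sup ρ, fun i => key _ i (le_sup (mem_univ i))⟩

end MDP

section SkipFree

theorem sum_mul_sum_Ioc {ι : Type*} [Fintype ι] [LinearOrder ι] [LocallyFiniteOrder ι]
    [LocallyFiniteOrderTop ι] (q φ : ι → ℝ) (b : ι) :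
    ∑ j, q j * ∑ k ∈ Ioc b j, φ k = ∑ k ∈ Ioi b, (∑ s ∈ Ici k, q s) * φ k := by
  simp_rw [mul_sum, sum_mul]
  exact sum_comm' fun j k => by simp [and_comm]

def cumSum {ι : Type*} [Preorder ι] [LocallyFiniteOrder ι] (b : ι) (φ : ι → ℝ) (j : ι) :
    ℝ :=
  ∑ k ∈ Ioc b j, φ k

theorem cumSum_self {ι : Type*} [Preorder ι] [LocallyFiniteOrder ι] (b : ι) (φ : ι → ℝ) :
    cumSum b φ b = 0 := by
  rw [cumSum, Ioc_self, sum_empty]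

variable {M : ℕ} {A : Type*}

theorem Fin.succ_sub_one_eq_castSucc (i : Fin M) : (i.succ : Fin (M + 1)) - 1 = i.castSucc :=
  Fin.ext (by simp [Fin.coe_sub_one, Fin.succ_ne_zero])

namespace MDP

variable (Mdp : MDP (Fin (M + 1)) A)

def SkipFreeDown : Prop :=
  ∀ (i j : Fin (M + 1)) (a : A), (j : ℕ) + 1 < (i : ℕ) → Mdp.p i a j = 0

/-- The numerator of the test quantities of the algorithm. -/
noncomputable def reducedCost (x : ℝ) (φ : Fin (M + 1) → ℝ) (i : Fin (M + 1)) (a : A) :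
    ℝ :=
  Mdp.c i a - x + ∑ k ∈ Ioi i, ptailF Mdp i a k * φ k

/-- The denominator of the test quantities: the expected return time to `i` when `τ_k` is the
expected time to move from `k` down to `k - 1`. -/
noncomputable def returnTime (τ : Fin (M + 1) → ℝ) (i : Fin (M + 1)) (a : A) : ℝ :=
  1 + ∑ k ∈ Ioi i, ptailF Mdp i a k * τ k

/-- The states `i` with `d i ∈ B̄_i`. -/
noncomputable def barStates (d : Fin (M + 1) → A) : Finset (Fin (M + 1)) :=
  univ.filter fun i => i = 0 ∨ Mdp.p i (d i) (i - 1) = 0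

theorem reducedCost_sub_smul (x : ℝ) (φ τ : Fin (M + 1) → ℝ) (u : ℝ) (i : Fin (M + 1))
    (a : A) :
    Mdp.reducedCost x (φ - u • τ) i a
      = Mdp.reducedCost x φ i a - u * (Mdp.returnTime τ i a - 1) := by
  have hk : ∀ k, ptailF Mdp i a k * (u * τ k) = u * (ptailF Mdp i a k * τ k) := fun k => by ring
  simp only [reducedCost, returnTime, Pi.sub_apply, Pi.smul_apply, smul_eq_mul, mul_sub,
    sum_sub_distrib, hk, ← mul_sum]
  ring

theorem sum_p_mul_cumSum (i b : Fin (M + 1)) (a : A) (φ : Fin (M + 1) → ℝ) :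
    ∑ j, Mdp.p i a j * cumSum b φ j = ∑ k ∈ Ioi b, ptailF Mdp i a k * φ k :=
  sum_mul_sum_Ioc _ _ _

theorem sum_Iio_add_ptailF (i : Fin (M + 1)) (a : A) (k : Fin (M + 1)) :
    ∑ s ∈ Iio k, Mdp.p i a s + ptailF Mdp i a k = 1 := by
  rw [← Mdp.p_sum_one i a, ← sum_filter_add_sum_filter_not univ (· < k), ptailF]
  congr 1 <;> refine sum_congr (by ext; simp) fun _ _ => rfl

namespace SkipFreeDown

variable {Mdp}

theorem ptailF_eq_one (hsf : Mdp.SkipFreeDown) {i k : Fin (M + 1)} (a : A) (hk : k < i) :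
    ptailF Mdp i a k = 1 := by
  rw [← Mdp.sum_Iio_add_ptailF i a k, sum_eq_zero, zero_add]
  intro s hs
  exact hsf i s a (by rw [mem_Iio, Fin.lt_def] at hs; rw [Fin.lt_def] at hk; omega)

theorem ptailF_self (hsf : Mdp.SkipFreeDown) {i : Fin (M + 1)} (a : A) (hi : i ≠ 0) :
    ptailF Mdp i a i = 1 - Mdp.p i a (i - 1) := by
  have hcoe : ((i - 1 : Fin (M + 1)) : ℕ) = i - 1 := by rw [Fin.coe_sub_one, if_neg hi]
  have hi' : (i : ℕ) ≠ 0 := Fin.val_ne_iff.2 hi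
  rw [← Mdp.sum_Iio_add_ptailF i a i, sum_eq_single_of_mem (i - 1) (mem_Iio.2 ?_)]
  · ring
  · intro s hs hne
    refine hsf i s a ?_
    rw [mem_Iio, Fin.lt_def] at hs
    have : (s : ℕ) ≠ i - 1 := fun h => hne (Fin.ext (h.trans hcoe.symm))
    omega
  · rw [Fin.lt_def, hcoe]; omega

theorem sum_p_mul_cumSum_of_lt (hsf : Mdp.SkipFreeDown) {b i : Fin (M + 1)} (hbi : b < i)
    (a : A) (φ : Fin (M + 1) → ℝ) :
    ∑ j, Mdp.p i a j * cumSum b φ j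
      = cumSum b φ i - Mdp.p i a (i - 1) * φ i + ∑ k ∈ Ioi i, ptailF Mdp i a k * φ k := by
  have hsplit : Ioi b = Ioc b i ∪ Ioi i := by ext k; simp; grind
  have hIoc :
      ∑ k ∈ Ioc b i, ptailF Mdp i a k * φ k = cumSum b φ i - Mdp.p i a (i - 1) * φ i := by
    rw [cumSum, ← Ioo_insert_right hbi, sum_insert right_notMem_Ioo, sum_insert right_notMem_Ioo,
      hsf.ptailF_self a (ne_bot_of_gt hbi),
      sum_congr rfl fun k hk => by rw [hsf.ptailF_eq_one a (mem_Ioo.1 hk).2, one_mul]]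
    ring
  rw [Mdp.sum_p_mul_cumSum, hsplit, sum_union (disjoint_left.2 fun k hk hk' =>
    (mem_Ioc.1 hk).2.not_gt (mem_Ioi.1 hk')), hIoc]

theorem cost_add_mulVec_cumSum_of_lt (hsf : Mdp.SkipFreeDown) (d : Fin (M + 1) → A) (x : ℝ)
    (φ : Fin (M + 1) → ℝ) {b i : Fin (M + 1)} (hbi : b < i) :
    Mdp.c i (d i) + (Mdp.Pmat d *ᵥ cumSum b φ) i
      = x + cumSum b φ i + (Mdp.reducedCost x φ i (d i) - Mdp.p i (d i) (i - 1) * φ i) := by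
  rw [Pmat_mulVec_apply, hsf.sum_p_mul_cumSum_of_lt hbi, reducedCost]
  ring

theorem isClosedSet_Ici (hsf : Mdp.SkipFreeDown) {d : Fin (M + 1) → A} {r : Fin (M + 1)}
    (hr : r ∈ Mdp.barStates d) : IsClosedSet (Mdp.Pmat d) (Ici r) := by
  intro i hi j hij
  rw [mem_Ici] at hi ⊢
  have hij' : (i : ℕ) ≤ j + 1 := by
    by_contra h
    exact hij (hsf i j _ (by omega))
  rcases hi.lt_or_eq with hlt | rfl
  · rw [Fin.le_def]; rw [Fin.lt_def] at hlt; omega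
  · by_cases hr0 : r = 0
    · exact hr0 ▸ Fin.zero_le j
    · have hp : Mdp.p r (d r) (r - 1) = 0 := by simpa [barStates, hr0] using hr
      have hj : (j : ℕ) ≠ r - 1 := fun h =>
        hij (by rw [show j = r - 1 from Fin.ext (by rw [h, Fin.coe_sub_one, if_neg hr0])]; exact hp)
      rw [Fin.le_def]; omega

end SkipFreeDown

theorem cost_add_mulVec_cumSum_self (d : Fin (M + 1) → A) (x : ℝ) (φ : Fin (M + 1) → ℝ)
    (b : Fin (M + 1)) :
    Mdp.c b (d b) + (Mdp.Pmat d *ᵥ cumSum b φ) b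
      = x + cumSum b φ b + Mdp.reducedCost x φ b (d b) := by
  rw [Pmat_mulVec_apply, sum_p_mul_cumSum, cumSum_self, reducedCost]
  ring

/-- Follow downward steps until a state of `barStates d` is met, at the latest `0`. -/
theorem exists_pos_sum_pow_barStates (d : Fin (M + 1) → A) (i : Fin (M + 1)) :
    ∃ k, 0 < ∑ j ∈ Mdp.barStates d, (Mdp.Pmat d ^ k) i j := by
  by_cases hi : i ∈ Mdp.barStates d
  · exact ⟨0, by simp [one_apply, hi]⟩
  induction i using Fin.induction with
  | zero => simp [barStates] at hi
  | succ i ih =>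
    have hp : 0 < Mdp.p i.succ (d i.succ) i.castSucc := by
      rw [← Fin.succ_sub_one_eq_castSucc]
      exact (Mdp.p_nonneg _ _ _).lt_of_ne' (by simpa [barStates] using hi)
    obtain ⟨k, hk⟩ : ∃ k, 0 < ∑ j ∈ Mdp.barStates d, (Mdp.Pmat d ^ k) i.castSucc j := by
      by_cases hc : i.castSucc ∈ Mdp.barStates d
      · exact ⟨0, by simp [one_apply, hc]⟩
      · exact ih hc
    exact ⟨k + 1, (mul_pos hp hk).trans_le
      (le_sum_pow_succ_apply (Mdp.Pmat_mem_rowStochastic d) _ k _ _)⟩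

end MDP

end SkipFree

theorem mul_le_of_eq_iInf_div {ι : Type*} [Finite ι] {f q : ι → ℝ} {y : ℝ}
    (hy : y = ⨅ a, f a / q a) (a : ι) (hq : 0 < q a) : q a * y ≤ f a := by
  rw [mul_comm, ← le_div_iff₀ hq, hy]
  exact ciInf_le (Set.finite_range _).bddBelow a

structure SkipFreeRun (M : ℕ) (A : Type*) where
  Mdp : MDP (Fin (M + 1)) A
  skipFree : Mdp.SkipFreeDown
  communicating :
    ∀ i j : Fin (M + 1), ∃ d : Fin (M + 1) → A, ∃ n : ℕ, 0 < ((Mdp.Pmat d) ^ n) i j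
  B : Fin (M + 1) → Set A
  Bbar : Fin (M + 1) → Set A
  B_def : ∀ i, B i = {a : A | 0 < Mdp.p i a (i - 1)}
  Bbar_def : ∀ i, Bbar i = if i = 0 then (Set.univ : Set A) else {a : A | Mdp.p i a (i - 1) = 0}
  d : ℕ → Fin (M + 1) → A
  g : ℕ → ℝ
  y : ℕ → Fin (M + 1) → ℝ
  t : ℕ → Fin (M + 1) → ℝ
  aa : ℕ → Fin (M + 1) → A
  ar : ℕ → Fin (M + 1) → A
  u : ℕ → Fin (M + 1) → ℝ
  g_zero : ∀ j, g 0 = Mdp.avgCost (d 0) j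
  y_eq : ∀ n, ∀ i : Fin (M + 1), i ≠ 0 →
    y n i = ⨅ a : B i, Mdp.reducedCost (g n) (y n) i a / Mdp.p i a (i - 1)
  aa_spec : ∀ n, ∀ i : Fin (M + 1), i ≠ 0 →
    aa n i ∈ B i ∧ Mdp.reducedCost (g n) (y n) i (aa n i) / Mdp.p i (aa n i) (i - 1) = y n i
  t_eq : ∀ n, ∀ i : Fin (M + 1), i ≠ 0 →
    t n i = Mdp.returnTime (t n) i (aa n i) / Mdp.p i (aa n i) (i - 1)
  u_spec : ∀ n, ∀ r : Fin (M + 1), (Bbar r).Nonempty →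
    ar n r ∈ Bbar r
    ∧ u n r = ⨅ a : Bbar r, Mdp.reducedCost (g n) (y n) r a / Mdp.returnTime (t n) r a
    ∧ Mdp.reducedCost (g n) (y n) r (ar n r) / Mdp.returnTime (t n) r (ar n r) = u n r
  step : ∀ n, ∃ r : Fin (M + 1), (Bbar r).Nonempty
    ∧ g (n + 1) = g n + u n r
    ∧ (∀ r' : Fin (M + 1), (Bbar r').Nonempty → g (n + 1) ≤ g n + u n r')
    ∧ d (n + 1) r = ar n r
    ∧ (∀ i : Fin (M + 1), r < i → d (n + 1) i = aa n i)

namespace SkipFreeRun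

variable {M : ℕ} {A : Type*} (R : SkipFreeRun M A)

theorem mem_B_iff {i : Fin (M + 1)} {a : A} : a ∈ R.B i ↔ 0 < R.Mdp.p i a (i - 1) := by
  rw [R.B_def]; rfl

theorem mem_barStates_iff {d : Fin (M + 1) → A} {i : Fin (M + 1)} :
    i ∈ R.Mdp.barStates d ↔ d i ∈ R.Bbar i := by
  rw [R.Bbar_def]
  split_ifs with hi <;> simp [MDP.barStates, hi]

theorem p_aa_pos (n : ℕ) {i : Fin (M + 1)} (hi : i ≠ 0) : 0 < R.Mdp.p i (R.aa n i) (i - 1) :=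
  R.mem_B_iff.1 (R.aa_spec n i hi).1

theorem t_pos (n : ℕ) {i : Fin (M + 1)} (hi : i ≠ 0) : 0 < R.t n i := by
  induction i using WellFoundedGT.induction with
  | _ i ih =>
    rw [R.t_eq n i hi, MDP.returnTime]
    refine div_pos (add_pos_of_pos_of_nonneg one_pos (sum_nonneg fun k hk => ?_)) (R.p_aa_pos n hi)
    have hik := mem_Ioi.1 hk
    exact mul_nonneg (sum_nonneg fun _ _ => R.Mdp.p_nonneg _ _ _) (ih k hik (ne_bot_of_gt hik)).le

theorem one_le_returnTime (n : ℕ) (r : Fin (M + 1)) (a : A) :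
    1 ≤ R.Mdp.returnTime (R.t n) r a := by
  refine le_add_of_nonneg_right (sum_nonneg fun k hk => mul_nonneg
    (sum_nonneg fun _ _ => R.Mdp.p_nonneg _ _ _) (R.t_pos n (ne_bot_of_gt (mem_Ioi.1 hk))).le)

theorem reducedCost_aa (n : ℕ) {i : Fin (M + 1)} (hi : i ≠ 0) :
    R.Mdp.reducedCost (R.g n) (R.y n) i (R.aa n i) = R.Mdp.p i (R.aa n i) (i - 1) * R.y n i := by
  rw [← (R.aa_spec n i hi).2, mul_div_cancel₀ _ (R.p_aa_pos n hi).ne']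

theorem returnTime_aa (n : ℕ) {i : Fin (M + 1)} (hi : i ≠ 0) :
    R.Mdp.returnTime (R.t n) i (R.aa n i) = R.Mdp.p i (R.aa n i) (i - 1) * R.t n i := by
  rw [R.t_eq n i hi, mul_div_cancel₀ _ (R.p_aa_pos n hi).ne']

theorem reducedCost_ar (n : ℕ) {r : Fin (M + 1)} (hr : (R.Bbar r).Nonempty) :
    R.Mdp.reducedCost (R.g n) (R.y n) r (R.ar n r)
      = R.u n r * R.Mdp.returnTime (R.t n) r (R.ar n r) := by
  rw [← (R.u_spec n r hr).2.2, div_mul_cancel₀ _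
    (zero_lt_one.trans_le (R.one_le_returnTime n r _)).ne']

theorem p_mul_y_le_reducedCost [Finite A] (n : ℕ) {i : Fin (M + 1)} (hi : i ≠ 0) {a : A}
    (ha : a ∈ R.B i) :
    R.Mdp.p i a (i - 1) * R.y n i ≤ R.Mdp.reducedCost (R.g n) (R.y n) i a :=
  mul_le_of_eq_iInf_div (R.y_eq n i hi) ⟨a, ha⟩ (R.mem_B_iff.1 ha)

theorem u_mul_le_reducedCost [Finite A] (n : ℕ) {r : Fin (M + 1)} (hr : (R.Bbar r).Nonempty)
    {a : A} (ha : a ∈ R.Bbar r) :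
    R.u n r * R.Mdp.returnTime (R.t n) r a ≤ R.Mdp.reducedCost (R.g n) (R.y n) r a := by
  rw [mul_comm]
  exact mul_le_of_eq_iInf_div (R.u_spec n r hr).2.1 ⟨a, ha⟩
    (zero_lt_one.trans_le (R.one_le_returnTime n r a))

theorem poisson_succ (n : ℕ) {r : Fin (M + 1)} (hr : (R.Bbar r).Nonempty)
    (hdr : R.d (n + 1) r = R.ar n r) (hdi : ∀ i, r < i → R.d (n + 1) i = R.aa n i)
    {i : Fin (M + 1)} (hi : r ≤ i) :
    R.Mdp.c i (R.d (n + 1) i)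
        + (R.Mdp.Pmat (R.d (n + 1)) *ᵥ cumSum r (R.y n - R.u n r • R.t n)) i
      = R.g n + R.u n r + cumSum r (R.y n - R.u n r • R.t n) i := by
  rcases hi.lt_or_eq with hlt | rfl
  · have hi0 : i ≠ 0 := ne_bot_of_gt hlt
    rw [R.skipFree.cost_add_mulVec_cumSum_of_lt _ (R.g n) _ hlt, hdi i hlt,
      MDP.reducedCost_sub_smul, R.reducedCost_aa n hi0, R.returnTime_aa n hi0]
    simp only [Pi.sub_apply, Pi.smul_apply, smul_eq_mul]
    ring
  · rw [MDP.cost_add_mulVec_cumSum_self _ _ (R.g n), hdr, MDP.reducedCost_sub_smul,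
      R.reducedCost_ar n hr]
    ring

theorem isClosedSet_succ (n : ℕ) {r : Fin (M + 1)} (hr : (R.Bbar r).Nonempty)
    (hdr : R.d (n + 1) r = R.ar n r) : IsClosedSet (R.Mdp.Pmat (R.d (n + 1))) (Ici r) :=
  R.skipFree.isClosedSet_Ici (R.mem_barStates_iff.2 (hdr ▸ (R.u_spec n r hr).1))

theorem exists_avgCost_eq (n : ℕ) : ∃ z, R.Mdp.avgCost (R.d n) z = R.g n := by
  cases n with
  | zero => exact ⟨0, (R.g_zero 0).symm⟩
  | succ n =>
    obtain ⟨r, hr, hg, -, hdr, hdi⟩ := R.step n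
    refine ⟨r, ?_⟩
    rw [hg]
    exact R.Mdp.avgCost_eq_of_poisson (R.isClosedSet_succ n hr hdr)
      (fun i hi => R.poisson_succ n hr hdr hdi (mem_Ici.1 hi)) (mem_Ici.2 le_rfl)

/-- `cumSum 0 (y n)` is a Poisson supersolution for every policy, with slack
`g (n + 1) - g n` on its `barStates`. -/
theorem le_avgCost [Finite A] (n : ℕ) (hle : R.g n ≤ R.g (n + 1)) (d' : Fin (M + 1) → A) :
    ∃ β > 0, ∀ j, R.g n + (R.g (n + 1) - R.g n) * β ≤ R.Mdp.avgCost d' j := by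
  obtain ⟨-, -, -, hmin, -⟩ := R.step n
  have hε : 0 ≤ R.g (n + 1) - R.g n := sub_nonneg.2 hle
  have hbar : ∀ i, d' i ∈ R.Bbar i →
      R.g (n + 1) - R.g n ≤ R.Mdp.reducedCost (R.g n) (R.y n) i (d' i) := fun i hi => by
    have hu : R.g (n + 1) - R.g n ≤ R.u n i := by linarith [hmin i ⟨_, hi⟩]
    calc R.g (n + 1) - R.g n ≤ R.u n i := hu
      _ ≤ R.u n i * R.Mdp.returnTime (R.t n) i (d' i) :=
        le_mul_of_one_le_right (hε.trans hu) (R.one_le_returnTime n i _)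
      _ ≤ _ := R.u_mul_le_reducedCost n ⟨_, hi⟩ hi
  obtain ⟨L, hL, δ, hδ, hvisit⟩ := exists_le_sum_range_sum_pow_apply
    (R.Mdp.Pmat_mem_rowStochastic d') (R.Mdp.exists_pos_sum_pow_barStates d')
  refine ⟨δ / L, div_pos hδ (Nat.cast_pos.2 hL), fun j =>
    R.Mdp.le_avgCost_of_residual (h := cumSum 0 (R.y n)) hε hL hδ.le (fun i => ?_) hvisit j⟩
  have hmem : i ∈ R.Mdp.barStates d' ↔ d' i ∈ R.Bbar i := R.mem_barStates_iff
  rcases eq_or_ne i 0 with rfl | hi0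
  · have h0 : d' 0 ∈ R.Bbar 0 := hmem.1 (by simp [MDP.barStates])
    rw [R.Mdp.cost_add_mulVec_cumSum_self d' (R.g n), if_pos (hmem.2 h0)]
    linarith [hbar 0 h0]
  · rw [R.skipFree.cost_add_mulVec_cumSum_of_lt d' (R.g n) _ (Fin.pos_of_ne_zero hi0)]
    by_cases hp : R.Mdp.p i (d' i) (i - 1) = 0
    · have hi : d' i ∈ R.Bbar i := hmem.1 (by simp [MDP.barStates, hp])
      rw [if_pos (hmem.2 hi), hp, zero_mul, sub_zero]
      linarith [hbar i hi]
    · have hB : d' i ∈ R.B i := R.mem_B_iff.2 ((R.Mdp.p_nonneg _ _ _).lt_of_ne' hp)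
      rw [if_neg (by simp [MDP.barStates, hi0, hp])]
      linarith [R.p_mul_y_le_reducedCost n hi0 hB]

theorem g_succ_le [Finite A] (n : ℕ) : R.g (n + 1) ≤ R.g n := by
  by_contra! hlt
  obtain ⟨z, hz⟩ := R.exists_avgCost_eq n
  obtain ⟨β, hβ, hle⟩ := R.le_avgCost n hlt.le (R.d n)
  have := hle z
  rw [hz] at this
  nlinarith

theorem g_le_avgCost [Finite A] (n : ℕ) (heq : R.g (n + 1) = R.g n) (d' : Fin (M + 1) → A)
    (j : Fin (M + 1)) : R.g (n + 1) ≤ R.Mdp.avgCost d' j := by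
  obtain ⟨β, -, hle⟩ := R.le_avgCost n heq.ge d'
  simpa [heq] using hle j

theorem exists_g_succ_eq [Finite A] : ∃ n, R.g (n + 1) = R.g n := by
  by_contra! h
  have hanti : StrictAnti R.g := strictAnti_nat_of_succ_lt fun n => (R.g_succ_le n).lt_of_ne (h n)
  refine Set.infinite_range_of_injective hanti.injective
    ((Set.finite_range fun p : (Fin (M + 1) → A) × Fin (M + 1) =>
      R.Mdp.avgCost p.1 p.2).subset ?_)
  rintro _ ⟨n, rfl⟩
  obtain ⟨z, hz⟩ := R.exists_avgCost_eq n
  exact ⟨(R.d n, z), hz⟩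

theorem reducedCost_ar_eq_zero (n : ℕ) {K : Fin (M + 1)} (hK : (R.Bbar K).Nonempty)
    (huK : R.u n K = 0) : R.Mdp.reducedCost (R.g n) (R.y n) K (R.ar n K) = 0 := by
  rw [R.reducedCost_ar n hK, huK, zero_mul]

theorem iInf_reducedCost_eq_zero [Finite A] (n : ℕ) {K : Fin (M + 1)} (hK : (R.Bbar K).Nonempty)
    (huK : R.u n K = 0) : ⨅ a : R.Bbar K, R.Mdp.reducedCost (R.g n) (R.y n) K a = 0 := by
  have : Nonempty (R.Bbar K) := hK.to_subtype
  refine le_antisymm ?_ (le_ciInf fun a => ?_)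
  · calc _ ≤ R.Mdp.reducedCost (R.g n) (R.y n) K (R.ar n K) :=
          ciInf_le (Set.finite_range _).bddBelow (⟨_, (R.u_spec n K hK).1⟩ : R.Bbar K)
      _ = 0 := R.reducedCost_ar_eq_zero n hK huK
  · simpa [huK] using R.u_mul_le_reducedCost n hK a.2

theorem exists_optimal_policy [Finite A] (n : ℕ) (heq : R.g (n + 1) = R.g n) {K : Fin (M + 1)}
    (hK : (R.Bbar K).Nonempty) (hgK : R.g (n + 1) = R.g n + R.u n K)
    (hdK : R.d (n + 1) K = R.ar n K) (hdi : ∀ i, K < i → R.d (n + 1) i = R.aa n i) :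
    ∃ d'' : Fin (M + 1) → A, (∀ i, K ≤ i → d'' i = R.d (n + 1) i)
      ∧ (∀ j, R.Mdp.avgCost d'' j = R.g (n + 1))
      ∧ ∀ (d' : Fin (M + 1) → A) (j : Fin (M + 1)),
          R.Mdp.avgCost d'' j ≤ R.Mdp.avgCost d' j := by
  have hF := R.isClosedSet_succ n hK hdK
  obtain ⟨d'', hd'', m, hm⟩ := R.Mdp.exists_policy_hitting hF fun i => by
    obtain ⟨d', k, hk⟩ := R.communicating i (Fin.last M)
    exact ⟨k, d', hk.trans_le (single_le_sum
      (fun j _ => (pow_mem (R.Mdp.Pmat_mem_rowStochastic d') k).1 i j)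
      (mem_Ici.2 (Fin.le_last K)))⟩
  set H := cumSum K (R.y n - R.u n K • R.t n)
  have hpoisson :
      ∀ i ∈ Ici K, R.Mdp.cvec d'' i + (R.Mdp.Pmat d'' *ᵥ H) i = R.g (n + 1) + H i :=
    fun i hi => by
      rw [MDP.cvec, MDP.Pmat_mulVec_apply, hd'' i hi, ← MDP.Pmat_mulVec_apply, hgK]
      exact R.poisson_succ n hK hdK hdi (mem_Ici.1 hi)
  obtain ⟨h', hh'⟩ := (R.Mdp.isClosedSet_Pmat_of_eqOn hF hd'').exists_poisson_extension
    (R.Mdp.Pmat_mem_rowStochastic d'') hm hpoisson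
  have havg : ∀ j, R.Mdp.avgCost d'' j = R.g (n + 1) := fun j =>
    R.Mdp.avgCost_eq_of_poisson (F := univ) (fun _ _ _ _ => mem_univ _) (fun i _ => hh' i)
      (mem_univ j)
  exact ⟨d'', fun i hi => hd'' i (mem_Ici.2 hi), havg, fun d' j =>
    (havg j).trans_le (R.g_le_avgCost n heq d' j)⟩

end SkipFreeRun

theorem stmt15_general {M : ℕ} {A : Type*} [Fintype A]
    (Mdp : MDP (Fin (M + 1)) A)
    (hsf : ∀ (i j : Fin (M + 1)) (a : A), (j : ℕ) + 1 < (i : ℕ) → Mdp.p i a j = 0)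
    (hcomm : ∀ i j : Fin (M + 1), ∃ d : Fin (M + 1) → A, ∃ n : ℕ, 0 < ((Mdp.Pmat d) ^ n) i j)
    (B Bbar : Fin (M + 1) → Set A)
    (hBdef : ∀ i, B i = {a : A | 0 < Mdp.p i a (i - 1)})
    (hBbardef : ∀ i, Bbar i = if i = 0 then (Set.univ : Set A)
        else {a : A | Mdp.p i a (i - 1) = 0})
    (d : ℕ → Fin (M + 1) → A) (g : ℕ → ℝ)
    (y t : ℕ → Fin (M + 1) → ℝ) (aa ar : ℕ → Fin (M + 1) → A)
    (u : ℕ → Fin (M + 1) → ℝ)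
    (hg0 : (∃! E : Set (Fin (M + 1)), IsClosedClass (Mdp.Pmat (d 0)) E)
      ∧ ∀ j, g 0 = Mdp.avgCost (d 0) j)
    (hy : ∀ n, ∀ i : Fin (M + 1), i ≠ 0 →
      y n i = ⨅ a : (B i),
        (Mdp.c i ↑a - g n + ∑ k ∈ Finset.Ioi i, ptailF Mdp i ↑a k * y n k)
          / Mdp.p i ↑a (i - 1))
    (haa : ∀ n, ∀ i : Fin (M + 1), i ≠ 0 → aa n i ∈ B i ∧
      (Mdp.c i (aa n i) - g n + ∑ k ∈ Finset.Ioi i, ptailF Mdp i (aa n i) k * y n k)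
          / Mdp.p i (aa n i) (i - 1) = y n i)
    (ht : ∀ n, ∀ i : Fin (M + 1), i ≠ 0 →
      t n i = (1 + ∑ k ∈ Finset.Ioi i, ptailF Mdp i (aa n i) k * t n k)
          / Mdp.p i (aa n i) (i - 1))
    (hu : ∀ n, ∀ r : Fin (M + 1), (Bbar r).Nonempty →
      ar n r ∈ Bbar r
      ∧ u n r = ⨅ a : (Bbar r),
          (Mdp.c r ↑a - g n + ∑ k ∈ Finset.Ioi r, ptailF Mdp r ↑a k * y n k)
            / (1 + ∑ k ∈ Finset.Ioi r, ptailF Mdp r ↑a k * t n k)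
      ∧ (Mdp.c r (ar n r) - g n + ∑ k ∈ Finset.Ioi r, ptailF Mdp r (ar n r) k * y n k)
            / (1 + ∑ k ∈ Finset.Ioi r, ptailF Mdp r (ar n r) k * t n k) = u n r)
    (hstep : ∀ n, ∃ r : Fin (M + 1), (Bbar r).Nonempty
      ∧ g (n + 1) = g n + u n r
      ∧ (∀ r' : Fin (M + 1), (Bbar r').Nonempty → g (n + 1) ≤ g n + u n r')
      ∧ (∀ r' : Fin (M + 1), (Bbar r').Nonempty → g n + u n r' = g (n + 1) → r ≤ r')
      ∧ d (n + 1) r = ar n r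
      ∧ (∀ i : Fin (M + 1), r < i → d (n + 1) i = aa n i)) :
    (∀ n : ℕ,
      g (n + 1) < g n
      ∨ (g (n + 1) = g n
        ∧ (∀ (d' : Fin (M + 1) → A) (j : Fin (M + 1)), g (n + 1) ≤ Mdp.avgCost d' j)
        ∧ ∃ K : Fin (M + 1), (Bbar K).Nonempty
          ∧ (∀ i : Fin (M + 1), K < i →
              (Mdp.c i (d (n + 1) i) - g (n + 1)
                  + ∑ k ∈ Finset.Ioi i, ptailF Mdp i (d (n + 1) i) k * y n k)
                / Mdp.p i (d (n + 1) i) (i - 1) = y n i)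
          ∧ (0 = ⨅ a : (Bbar K),
              (Mdp.c K ↑a - g (n + 1) + ∑ k ∈ Finset.Ioi K, ptailF Mdp K ↑a k * y n k))
          ∧ (Mdp.c K (d (n + 1) K) - g (n + 1)
              + ∑ k ∈ Finset.Ioi K, ptailF Mdp K (d (n + 1) K) k * y n k = 0)
          ∧ ∃ d'' : Fin (M + 1) → A,
              (∀ i : Fin (M + 1), K ≤ i → d'' i = d (n + 1) i)
              ∧ (∀ j, Mdp.avgCost d'' j = g (n + 1))
              ∧ ∀ (d' : Fin (M + 1) → A) (j : Fin (M + 1)),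
                  Mdp.avgCost d'' j ≤ Mdp.avgCost d' j))
    ∧ ∃ n : ℕ, g (n + 1) = g n := by
  let R : SkipFreeRun M A :=
    ⟨Mdp, hsf, hcomm, B, Bbar, hBdef, hBbardef, d, g, y, t, aa, ar, u, hg0.2, hy, haa, ht, hu,
      fun n => let ⟨r, hr, hg, hmin, _, hdr, hdi⟩ := hstep n; ⟨r, hr, hg, hmin, hdr, hdi⟩⟩
  refine ⟨fun n => ?_, R.exists_g_succ_eq⟩
  rcases (R.g_succ_le n).lt_or_eq with hlt | (heq : g (n + 1) = g n)
  · exact Or.inl hlt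
  obtain ⟨K, hK, hgK, -, -, hdK, hdi⟩ := hstep n
  have huK : u n K = 0 := by linarith
  refine Or.inr ⟨heq, R.g_le_avgCost n heq, K, hK, fun i hi => ?_, ?_, ?_,
    R.exists_optimal_policy n heq hK hgK hdK hdi⟩
  · rw [heq, hdi i hi]
    exact (haa n i (ne_bot_of_gt hi)).2
  · rw [heq]
    exact (R.iInf_reducedCost_eq_zero n hK huK).symm
  · rw [heq, hdK]
    exact R.reducedCost_ar_eq_zero n hK huK

/-- Theorem 2. For the modified skip-free algorithm applied to a finite
communicating skip-free MDP on `{0,…,M}`: (i) at each iteration either `g (n+1) < g n`, or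
`g (n+1) = g n`, in which case `g (n+1)` is the minimal average cost, there is `K` such
that `d (n+1)` together with `x = g (n+1)` and the computed values `y n` satisfies the
skip-free optimality equations of the restricted model `Π_K` on states `K,…,M`, and
`d (n+1)` can be modified on the states `0,…,K-1` to give a policy that is average cost
optimal for every starting state; (ii) the algorithm converges after finitely many
iterations. -/
theorem stmt15 {M : ℕ} {A : Type*} [Fintype A] [Nonempty A]
    (Mdp : MDP (Fin (M + 1)) A)
    (hsf : ∀ (i j : Fin (M + 1)) (a : A), (j : ℕ) + 1 < (i : ℕ) → Mdp.p i a j = 0)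
    (hBne : ∀ i : Fin (M + 1), i ≠ 0 → ∃ a : A, 0 < Mdp.p i a (i - 1))
    (hcomm : ∀ i j : Fin (M + 1), ∃ d : Fin (M + 1) → A, ∃ n : ℕ, 0 < ((Mdp.Pmat d) ^ n) i j)
    (B Bbar : Fin (M + 1) → Set A)
    (hBdef : ∀ i, B i = {a : A | 0 < Mdp.p i a (i - 1)})
    (hBbardef : ∀ i, Bbar i = if i = 0 then (Set.univ : Set A)
        else {a : A | Mdp.p i a (i - 1) = 0})
    (d : ℕ → Fin (M + 1) → A) (g : ℕ → ℝ)
    (y t : ℕ → Fin (M + 1) → ℝ) (aa ar : ℕ → Fin (M + 1) → A)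
    (u : ℕ → Fin (M + 1) → ℝ)
    (hg0 : (∃! E : Set (Fin (M + 1)), IsClosedClass (Mdp.Pmat (d 0)) E)
      ∧ ∀ j, g 0 = Mdp.avgCost (d 0) j)
    (hy : ∀ n, ∀ i : Fin (M + 1), i ≠ 0 →
      y n i = ⨅ a : (B i),
        (Mdp.c i ↑a - g n + ∑ k ∈ Finset.Ioi i, ptailF Mdp i ↑a k * y n k)
          / Mdp.p i ↑a (i - 1))
    (haa : ∀ n, ∀ i : Fin (M + 1), i ≠ 0 → aa n i ∈ B i ∧
      (Mdp.c i (aa n i) - g n + ∑ k ∈ Finset.Ioi i, ptailF Mdp i (aa n i) k * y n k)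
          / Mdp.p i (aa n i) (i - 1) = y n i)
    (ht : ∀ n, ∀ i : Fin (M + 1), i ≠ 0 →
      t n i = (1 + ∑ k ∈ Finset.Ioi i, ptailF Mdp i (aa n i) k * t n k)
          / Mdp.p i (aa n i) (i - 1))
    (hu : ∀ n, ∀ r : Fin (M + 1), (Bbar r).Nonempty →
      ar n r ∈ Bbar r
      ∧ u n r = ⨅ a : (Bbar r),
          (Mdp.c r ↑a - g n + ∑ k ∈ Finset.Ioi r, ptailF Mdp r ↑a k * y n k)
            / (1 + ∑ k ∈ Finset.Ioi r, ptailF Mdp r ↑a k * t n k)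
      ∧ (Mdp.c r (ar n r) - g n + ∑ k ∈ Finset.Ioi r, ptailF Mdp r (ar n r) k * y n k)
            / (1 + ∑ k ∈ Finset.Ioi r, ptailF Mdp r (ar n r) k * t n k) = u n r)
    (hstep : ∀ n, ∃ r : Fin (M + 1), (Bbar r).Nonempty
      ∧ g (n + 1) = g n + u n r
      ∧ (∀ r' : Fin (M + 1), (Bbar r').Nonempty → g (n + 1) ≤ g n + u n r')
      ∧ (∀ r' : Fin (M + 1), (Bbar r').Nonempty → g n + u n r' = g (n + 1) → r ≤ r')
      ∧ d (n + 1) r = ar n r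
      ∧ (∀ i : Fin (M + 1), r < i → d (n + 1) i = aa n i)) :
    (∀ n : ℕ,
      g (n + 1) < g n
      ∨ (g (n + 1) = g n
        ∧ (∀ (d' : Fin (M + 1) → A) (j : Fin (M + 1)), g (n + 1) ≤ Mdp.avgCost d' j)
        ∧ ∃ K : Fin (M + 1), (Bbar K).Nonempty
          ∧ (∀ i : Fin (M + 1), K < i →
              (Mdp.c i (d (n + 1) i) - g (n + 1)
                  + ∑ k ∈ Finset.Ioi i, ptailF Mdp i (d (n + 1) i) k * y n k)
                / Mdp.p i (d (n + 1) i) (i - 1) = y n i)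
          ∧ (0 = ⨅ a : (Bbar K),
              (Mdp.c K ↑a - g (n + 1) + ∑ k ∈ Finset.Ioi K, ptailF Mdp K ↑a k * y n k))
          ∧ (Mdp.c K (d (n + 1) K) - g (n + 1)
              + ∑ k ∈ Finset.Ioi K, ptailF Mdp K (d (n + 1) K) k * y n k = 0)
          ∧ ∃ d'' : Fin (M + 1) → A,
              (∀ i : Fin (M + 1), K ≤ i → d'' i = d (n + 1) i)
              ∧ (∀ j, Mdp.avgCost d'' j = g (n + 1))
              ∧ ∀ (d' : Fin (M + 1) → A) (j : Fin (M + 1)),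
                  Mdp.avgCost d'' j ≤ Mdp.avgCost d' j))
    ∧ ∃ n : ℕ, g (n + 1) = g n :=
  stmt15_general Mdp hsf hcomm B Bbar hBdef hBbardef d g y t aa ar u hg0 hy haa ht hu hstep
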